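/- Let 𝒜, P, M, Q_z be real N×N matrices, B_u ∈ ℝ^{N×m}, C_z ∈ ℝ^{q×N}, R_u ∈ ℝ^{m×m} symmetric, and S_P ∈ ℝ^{q×q}. Assume P, M, Q_z, S_P are symmetric and R_u + B_uᵀ·M·B_u is invertible with symmetric inverse S_M = (R_u + B_uᵀ·M·B_u)⁻¹. Set K = −S_M·B_uᵀ·M·𝒜·P·C_zᵀ·S_P. If M = (𝒜 + B_u·K·C_z)ᵀ·M·(𝒜 + B_u·K·C_z) + Q_z + C_zᵀ·Kᵀ·R_u·K·C_z, then M = 𝒜ᵀ·M·𝒜 − 𝒜ᵀ·M·B_u·S_M·B_uᵀ·M·𝒜 + Q_z + (I − P·C_zᵀ·S_P·C_z)ᵀ·𝒜ᵀ·M·B_u·S_M·B_uᵀ·M·𝒜·(I − P·C_zᵀ·S_P·C_z). -/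

import Mathlib

/-!
Write `K C_z = -G Π` with `G = S_M B_uᵀ M 𝒜` and `Π = P C_zᵀ S_P C_z`. In the closed-loop cost
the input penalty and the `B_u`-quadratic part of `𝒜_cᵀ M 𝒜_c` combine into
`Πᵀ Gᵀ (R_u + B_uᵀ M B_u) G Π`, and `S_M (R_u + B_uᵀ M B_u) = 1` collapses this to `Πᵀ X Π` with
`X = 𝒜ᵀ M B_u S_M B_uᵀ M 𝒜`. The cost is thus `𝒜ᵀ M 𝒜 - Πᵀ X - X Π + Πᵀ X Π`, which is
`𝒜ᵀ M 𝒜 - X + (I - Π)ᵀ X (I - Π)`.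
-/

open Matrix

section ClosedLoopCost

variable {R n m : Type*} [CommRing R] [Fintype n] [Fintype m] [DecidableEq n] [DecidableEq m]

theorem transpose_one_sub_mul_mul_one_sub (X L : Matrix n n R) :
    (1 - L)ᵀ * X * (1 - L) = X - Lᵀ * X - X * L + Lᵀ * X * L := by
  simp only [transpose_sub, transpose_one, Matrix.sub_mul, Matrix.mul_sub, Matrix.one_mul,
    Matrix.mul_one]
  abel

theorem closed_loop_cost_eq_riccati {A M L : Matrix n n R} {B : Matrix n m R}
    {S Ru : Matrix m m R} (hM : Mᵀ = M) (hS : Sᵀ = S) (hSR : S * (Ru + Bᵀ * M * B) = 1) :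
    (A - B * (S * Bᵀ * M * A * L))ᵀ * M * (A - B * (S * Bᵀ * M * A * L))
        + (S * Bᵀ * M * A * L)ᵀ * Ru * (S * Bᵀ * M * A * L)
      = Aᵀ * M * A - Aᵀ * M * B * S * Bᵀ * M * A
        + (1 - L)ᵀ * (Aᵀ * M * B * S * Bᵀ * M * A) * (1 - L) := by
  set G := S * Bᵀ * M * A
  have hG_transpose : Gᵀ = Aᵀ * M * B * S := by
    simp only [G, transpose_mul, transpose_transpose, hM, hS, Matrix.mul_assoc]
  have hquad : Gᵀ * (Ru + Bᵀ * M * B) * G = Aᵀ * M * B * S * Bᵀ * M * A := by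
    rw [hG_transpose]
    calc Aᵀ * M * B * S * (Ru + Bᵀ * M * B) * (S * Bᵀ * M * A)
        = Aᵀ * M * B * (S * (Ru + Bᵀ * M * B)) * (S * Bᵀ * M * A) := by
          simp only [Matrix.mul_assoc]
      _ = Aᵀ * M * B * S * Bᵀ * M * A := by
          rw [hSR, Matrix.mul_one]; simp only [Matrix.mul_assoc]
  calc (A - B * (G * L))ᵀ * M * (A - B * (G * L)) + (G * L)ᵀ * Ru * (G * L)
      = Aᵀ * M * A - Lᵀ * (Gᵀ * (Bᵀ * M * A)) - (Aᵀ * M * B * G) * L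
          + Lᵀ * (Gᵀ * (Ru + Bᵀ * M * B) * G) * L := by
        simp only [transpose_sub, transpose_mul, Matrix.sub_mul, Matrix.mul_sub,
          Matrix.add_mul, Matrix.mul_add, Matrix.mul_assoc]
        abel
    _ = Aᵀ * M * A - Aᵀ * M * B * S * Bᵀ * M * A
          + (1 - L)ᵀ * (Aᵀ * M * B * S * Bᵀ * M * A) * (1 - L) := by
        rw [hquad, hG_transpose, transpose_one_sub_mul_mul_one_sub]
        simp only [G, Matrix.mul_assoc]
        abel

end ClosedLoopCost

theorem behavioral_riccati_M_general {N m q : ℕ}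
    (A P M Qz : Matrix (Fin N) (Fin N) ℝ)
    (Bu : Matrix (Fin N) (Fin m) ℝ) (Cz : Matrix (Fin q) (Fin N) ℝ)
    (Ru : Matrix (Fin m) (Fin m) ℝ) (SP : Matrix (Fin q) (Fin q) ℝ)
    (hM : Mᵀ = M)
    (hinv : IsUnit (Ru + Buᵀ * M * Bu).det)
    (SM : Matrix (Fin m) (Fin m) ℝ) (hSM : SM = (Ru + Buᵀ * M * Bu)⁻¹) (hSMsymm : SMᵀ = SM)
    (K : Matrix (Fin m) (Fin q) ℝ)
    (hK : K = -(SM * Buᵀ * M * A * P * Czᵀ * SP))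
    (hcost : M = (A + Bu * K * Cz)ᵀ * M * (A + Bu * K * Cz) + Qz + Czᵀ * Kᵀ * Ru * K * Cz) :
    M = Aᵀ * M * A - Aᵀ * M * Bu * SM * Buᵀ * M * A + Qz
      + (1 - P * Czᵀ * SP * Cz)ᵀ * (Aᵀ * M * Bu * SM * Buᵀ * M * A)
          * (1 - P * Czᵀ * SP * Cz) := by
  have hSR : SM * (Ru + Buᵀ * M * Bu) = 1 := hSM ▸ nonsing_inv_mul _ hinv
  set F := SM * Buᵀ * M * A * (P * Czᵀ * SP * Cz)
  have hKCz : K * Cz = -F := by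
    simp only [hK, F, Matrix.neg_mul, Matrix.mul_assoc]
  have hclosed : A + Bu * K * Cz = A - Bu * F := by
    rw [Matrix.mul_assoc, hKCz, Matrix.mul_neg, sub_eq_add_neg]
  have hpenalty : Czᵀ * Kᵀ * Ru * K * Cz = Fᵀ * Ru * F := by
    calc Czᵀ * Kᵀ * Ru * K * Cz = (K * Cz)ᵀ * Ru * (K * Cz) := by
          simp only [transpose_mul, Matrix.mul_assoc]
      _ = Fᵀ * Ru * F := by
          rw [hKCz, transpose_neg, Matrix.neg_mul, Matrix.neg_mul, Matrix.mul_neg, neg_neg]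
  calc M = (A - Bu * F)ᵀ * M * (A - Bu * F) + Fᵀ * Ru * F + Qz := by
        rw [add_right_comm, ← hclosed, ← hpenalty]; exact hcost
    _ = _ := by
        rw [closed_loop_cost_eq_riccati hM hSMsymm hSR, add_right_comm]

/-- **Riccati equation for `M` in the behavioral LQG solution (Theorem 1).**
With the optimal gain `K = -S_M B_uᵀ M 𝒜 P C_zᵀ S_P`, the closed-loop cost-to-go equation
`M = 𝒜_cᵀ M 𝒜_c + Q_z + C_zᵀ Kᵀ R_u K C_z` implies the coupled Riccati equation
`M = 𝒜ᵀ M 𝒜 - 𝒜ᵀ M B_u S_M B_uᵀ M 𝒜 + Q_z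
   + (I - P C_zᵀ S_P C_z)ᵀ 𝒜ᵀ M B_u S_M B_uᵀ M 𝒜 (I - P C_zᵀ S_P C_z)`. -/
theorem behavioral_riccati_M {N m q : ℕ}
    (A P M Qz : Matrix (Fin N) (Fin N) ℝ)
    (Bu : Matrix (Fin N) (Fin m) ℝ) (Cz : Matrix (Fin q) (Fin N) ℝ)
    (Ru : Matrix (Fin m) (Fin m) ℝ) (SP : Matrix (Fin q) (Fin q) ℝ)
    (hRu : Ruᵀ = Ru) (hP : Pᵀ = P) (hM : Mᵀ = M) (hQz : Qzᵀ = Qz) (hSP : SPᵀ = SP)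
    (hinv : IsUnit (Ru + Buᵀ * M * Bu).det)
    (SM : Matrix (Fin m) (Fin m) ℝ) (hSM : SM = (Ru + Buᵀ * M * Bu)⁻¹) (hSMsymm : SMᵀ = SM)
    (K : Matrix (Fin m) (Fin q) ℝ)
    (hK : K = -(SM * Buᵀ * M * A * P * Czᵀ * SP))
    (hcost : M = (A + Bu * K * Cz)ᵀ * M * (A + Bu * K * Cz) + Qz + Czᵀ * Kᵀ * Ru * K * Cz) :
    M = Aᵀ * M * A - Aᵀ * M * Bu * SM * Buᵀ * M * A + Qz
      + (1 - P * Czᵀ * SP * Cz)ᵀ * (Aᵀ * M * Bu * SM * Buᵀ * M * A)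
          * (1 - P * Czᵀ * SP * Cz) :=
  behavioral_riccati_M_general A P M Qz Bu Cz Ru SP hM hinv SM hSM hSMsymm K hK hcost
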